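/- Let M* be a Mealy machine with distinguisher bound B, and let M be a hypothesis Mealy machine with state set Q, such that: (1) for every state q of M with access representative R(q), every input i, the last output of M* on R(q)·i equals Out_M(q, i), and (2) for every state q and input i, the words R(q)·i and R(δ_M(q, i)) lead M* to states that agree on all suffixes of length ≤ B. Then M and M* produce the same output sequence on every input word. -/
import Mathlib


structure Mealy (Q I O : Type) where
  init : Q
  step : Q → I → Q
  out : Q → I → O

def Mealy.outs {Q I O : Type} (M : Mealy Q I O) : Q → List I → List O
  | _, [] => []
  | q, i :: w => M.out q i :: M.outs (M.step q i) w

def Mealy.steps {Q I O : Type} (M : Mealy Q I O) : Q → List I → Q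
  | q, [] => q
  | q, i :: w => M.steps (M.step q i) w

lemma Mealy.steps_append {Q I O : Type} (M : Mealy Q I O) (q : Q) (u v : List I) :
    M.steps q (u ++ v) = M.steps (M.steps q u) v := by
  induction u generalizing q with
  | nil => rfl
  | cons a u ih => simp [Mealy.steps, ih]

lemma Mealy.outs_append {Q I O : Type} (M : Mealy Q I O) (q : Q) (u v : List I) :
    M.outs q (u ++ v) = M.outs q u ++ M.outs (M.steps q u) v := by
  induction u generalizing q with
  | nil => rfl
  | cons a u ih => simp [Mealy.outs, Mealy.steps, ih]

theorem stmt_5 {Qs Q I O : Type} [Fintype Qs] [Fintype Q]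
    (Ms : Mealy Qs I O)   -- the target machine M*
    (M : Mealy Q I O)     -- the hypothesis machine
    (B : ℕ)
    -- M* has distinguisher bound B
    (hB : ∀ s₁ s₂ : Qs, (∃ w : List I, Ms.outs s₁ w ≠ Ms.outs s₂ w) →
      ∃ w : List I, w.length ≤ B ∧ Ms.outs s₁ w ≠ Ms.outs s₂ w)
    (R : Q → List I)
    -- R is an access-representative function for M, with R(q₀) = ε
    (hR : ∀ q : Q, M.steps M.init (R q) = q)
    (hR0 : R M.init = [])
    -- R is consistent with M*: representatives of distinct states of M
    -- reach observationally distinct states of M* (guaranteed in L*)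
    (hRdist : ∀ q q' : Q, q ≠ q' →
      ∃ w : List I, Ms.outs (Ms.steps Ms.init (R q)) w ≠
        Ms.outs (Ms.steps Ms.init (R q')) w)
    -- (1) the last output of M* on R(q)·i equals Out_M(q, i)
    (hout : ∀ (q : Q) (i : I),
      (Ms.outs Ms.init (R q ++ [i])).getLast? = some (M.out q i))
    -- (2) transition fidelity up to the distinguisher bound
    (htrans : ∀ (q : Q) (i : I) (s : List I), s.length ≤ B →
      Ms.outs (Ms.steps Ms.init (R q ++ [i])) s =
        Ms.outs (Ms.steps Ms.init (R (M.step q i))) s) :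
    ∀ w : List I, M.outs M.init w = Ms.outs Ms.init w := by
  -- state of M* reached by the representative of q
  set S : Q → Qs := fun q => Ms.steps Ms.init (R q) with hS
  -- equivalence of Ms.step (S q) i with S (M.step q i)
  have hstep : ∀ (q : Q) (i : I) (w : List I),
      Ms.outs (Ms.step (S q) i) w = Ms.outs (S (M.step q i)) w := by
    intro q i w
    by_contra hne
    obtain ⟨w', hw', hne'⟩ := hB (Ms.step (S q) i) (S (M.step q i)) ⟨w, hne⟩
    apply hne'
    have := htrans q i w' hw'
    rwa [Mealy.steps_append, Mealy.steps] at this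
  -- output agreement
  have houtS : ∀ (q : Q) (i : I), Ms.out (S q) i = M.out q i := by
    intro q i
    have := hout q i
    rw [Mealy.outs_append] at this
    simp [Mealy.outs] at this
    exact this
  -- main induction
  have main : ∀ (w : List I) (q : Q) (t : Qs),
      (∀ v, Ms.outs t v = Ms.outs (S q) v) → M.outs q w = Ms.outs t w := by
    intro w
    induction w with
    | nil => intro q t _; rfl
    | cons i w ih =>
      intro q t ht
      have h1 : Ms.out t i = M.out q i := by
        have := ht [i]
        simp [Mealy.outs] at this
        rw [this, houtS]
      have h2 : ∀ v, Ms.outs (Ms.step t i) v = Ms.outs (S (M.step q i)) v := by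
        intro v
        have := ht (i :: v)
        simp [Mealy.outs] at this
        rw [this.2, hstep]
      simp [Mealy.outs, h1.symm, ih (M.step q i) (Ms.step t i) h2]
  intro w
  exact main w M.init Ms.init (by intro v; simp [hS, hR0, Mealy.steps])
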